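/- arXiv:1406.5933 — 4 statements merged into one kernel-verified Lean document; each statement's English description precedes it below -/
import Mathlib

section
/- Let $(\Omega,\mathcal{A},P)$ be a probability space, $t, t_0$ positive integers with $t_0 \le t$, and for each $j \in \{1,\ldots,t\}$ and $s \in \{1,\ldots,t_0\}$ let $W_{j,s} \in \mathcal{A}$ be events satisfying: (i) $W_{j,s} \subseteq W_{j,s+1}$ for all $j$ and $s < t_0$ (monotonicity), and (ii) $P(W_{j,s}) \le \zeta_s$ for all $j,s$, where $0 = \zeta_0 \le \zeta_1 \le \cdots \le \zeta_{t_0} \le 1$. Let $V_s$ be the event that $W_{j,s}$ occurs for at least $s$ distinct indices $j \in \{1,\ldots,t\}$. Then $P\left(\bigcup_{s=1}^{t_0} V_s\right) \le t \sum_{s=1}^{t_0} \frac{\zeta_s - \zeta_{s-1}}{s}$. -/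
open Finset MeasureTheory
open scoped Classical

/-
Split the union of the events `V s` according to the first `s` at which it occurs. The pieces `B s`
are disjoint, and on `B s` at least `s` of the events `W j s` occur, so
`s * P (B s) ≤ ∑ j, P (W j s ∩ B s)`. For fixed `j`, the sets `W j r ∩ B r` with `r ≤ s` are
disjoint and, by monotonicity, contained in `W j s`; hence their partial sums are at most `ζ s`,
and summation by parts against the decreasing weights `1 / s` bounds
`∑ s, P (W j s ∩ B s) / s` by `∑ s, (ζ s - ζ (s - 1)) / s`.
-/

lemma sum_div_le_sum_sub_div (a G : ℕ → ℝ) (n : ℕ) (hG0 : G 0 ≤ 0)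
    (h : ∀ s ∈ Icc 1 n, ∑ r ∈ Icc 1 s, a r ≤ G s) :
    ∑ s ∈ Icc 1 n, a s / s ≤ ∑ s ∈ Icc 1 n, (G s - G (s - 1)) / s := by
  have slack_nonneg : ∀ m ∈ Icc 1 n, 0 ≤ G m - ∑ r ∈ Icc 1 m, a r := fun m hm =>
    sub_nonneg.2 (h m hm)
  -- summation by parts, carrying the nonnegative slack `G m - ∑ r ≤ m, a r` with weight `1 / m`
  suffices key : ∀ m ≤ n, ∑ s ∈ Icc 1 m, a s / s + (G m - ∑ r ∈ Icc 1 m, a r) / m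
      ≤ ∑ s ∈ Icc 1 m, (G s - G (s - 1)) / s by
    rcases n.eq_zero_or_pos with rfl | hn
    · simp
    have := div_nonneg (slack_nonneg n (mem_Icc.2 ⟨hn, le_rfl⟩)) n.cast_nonneg
    linarith [key n le_rfl]
  intro m hm
  induction m with
  | zero => simp
  | succ m ih =>
    set A := ∑ r ∈ Icc 1 m, a r
    have weight_le : (G m - A) / (m + 1) ≤ (G m - A) / m := by
      rcases m.eq_zero_or_pos with rfl | hm0
      -- at `m = 0` the right side is `G 0 / 0 = 0`
      · simpa [A] using hG0
      · exact div_le_div_of_nonneg_left (slack_nonneg m (mem_Icc.2 ⟨hm0, by omega⟩)) (by positivity)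
          (by linarith)
    have split : a (m + 1) / (m + 1) + (G (m + 1) - (A + a (m + 1))) / (m + 1)
        = (G (m + 1) - G m) / (m + 1) + (G m - A) / (m + 1) := by
      field_simp
      ring
    rw [sum_Icc_succ_top (by omega), sum_Icc_succ_top (by omega), sum_Icc_succ_top (by omega)]
    push_cast
    linarith [ih (by omega)]

section FirstHit

variable {Ω ι : Type*} [LinearOrder ι] (S : Finset ι) (V : ι → Set Ω)

def firstHit (s : ι) : Set Ω := V s \ ⋃ r ∈ S, ⋃ (_ : r < s), V r

lemma firstHit_subset (s : ι) : firstHit S V s ⊆ V s := Set.sdiff_subset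

lemma pairwiseDisjoint_firstHit : (S : Set ι).PairwiseDisjoint (firstHit S V) := by
  have disjoint_of_lt : ∀ r ∈ S, ∀ s, r < s → Disjoint (firstHit S V r) (firstHit S V s) :=
    fun r hr s hrs => Set.disjoint_left.2 fun ω hωr hωs =>
      hωs.2 (Set.mem_biUnion hr (Set.mem_iUnion.2 ⟨hrs, hωr.1⟩))
  intro r hr s hs hne
  rcases hne.lt_or_gt with h | h
  · exact disjoint_of_lt r hr s h
  · exact (disjoint_of_lt s hs r h).symm

lemma biUnion_firstHit : ⋃ s ∈ S, firstHit S V s = ⋃ s ∈ S, V s := by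
  refine Set.Subset.antisymm (Set.biUnion_mono subset_rfl fun s _ => firstHit_subset S V s) ?_
  simp only [Set.subset_def, Set.mem_iUnion]
  rintro ω ⟨s, hs, hωs⟩
  obtain ⟨m, hm, hmin⟩ := (S.filter (ω ∈ V ·)).exists_min_image id ⟨s, mem_filter.2 ⟨hs, hωs⟩⟩
  rw [mem_filter] at hm
  refine ⟨m, hm.1, hm.2, ?_⟩
  simp only [Set.mem_iUnion, not_exists]
  exact fun r hr hrm hωr => (hmin r (mem_filter.2 ⟨hr, hωr⟩)).not_gt hrm

lemma measurableSet_firstHit [MeasurableSpace Ω] (hV : ∀ s, MeasurableSet (V s)) (s : ι) :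
    MeasurableSet (firstHit S V s) :=
  (hV s).diff (S.measurableSet_biUnion fun r _ => MeasurableSet.iUnion fun _ => hV r)

end FirstHit

section Crossings

variable {Ω ι : Type*} [MeasurableSpace Ω] {μ : Measure Ω} [IsFiniteMeasure μ]

def crossingEvent (J : Finset ι) (E : ι → ℕ → Set Ω) (s : ℕ) : Set Ω :=
  {ω | s ≤ #{j ∈ J | ω ∈ E j s}}

lemma measurableSet_crossingEvent (J : Finset ι) {E : ι → ℕ → Set Ω}
    (hE : ∀ j s, MeasurableSet (E j s)) (s : ℕ) : MeasurableSet (crossingEvent J E s) := by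
  have : Measurable fun ω => #{j ∈ J | ω ∈ E j s} := by
    simp only [card_filter]
    exact measurable_sum _ fun j _ => Measurable.ite (hE j s) measurable_const measurable_const
  exact measurableSet_le measurable_const this

lemma natCast_mul_measureReal_le_sum (J : Finset ι) {E : ι → Set Ω}
    (hE : ∀ j ∈ J, MeasurableSet (E j)) {B : Set Ω} {k : ℕ}
    (hB : ∀ ω ∈ B, k ≤ #{j ∈ J | ω ∈ E j}) :
    k * μ.real B ≤ ∑ j ∈ J, μ.real (E j ∩ B) := by
  have hle : (k : ENNReal) * μ B ≤ ∑ j ∈ J, μ (E j ∩ B) := calc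
    (k : ENNReal) * μ B = ∫⁻ _ in B, (k : ENNReal) ∂μ := (setLIntegral_const B _).symm
    _ ≤ ∫⁻ ω in B, ∑ j ∈ J, (E j).indicator 1 ω ∂μ := by
      refine setLIntegral_mono (measurable_sum _ fun j hj =>
        measurable_one.indicator (hE j hj)) fun ω hω => ?_
      simp only [Set.indicator_apply, Pi.one_apply, sum_boole]
      exact_mod_cast hB ω hω
    _ = ∑ j ∈ J, μ (E j ∩ B) := by
      rw [lintegral_finsetSum _ fun j hj => measurable_one.indicator (hE j hj)]
      refine sum_congr rfl fun j hj => ?_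
      rw [lintegral_indicator_one (hE j hj), Measure.restrict_apply (hE j hj)]
  have := ENNReal.toReal_mono (ENNReal.sum_ne_top.2 fun j _ => measure_ne_top μ _) hle
  rwa [ENNReal.toReal_mul, ENNReal.toReal_sum fun j _ => measure_ne_top μ _] at this

lemma measureReal_biUnion_crossingEvent_le (J : Finset ι) (n : ℕ) {E : ι → ℕ → Set Ω}
    (hE : ∀ j s, MeasurableSet (E j s)) :
    μ.real (⋃ s ∈ Icc 1 n, crossingEvent J E s) ≤
      ∑ j ∈ J, ∑ s ∈ Icc 1 n, μ.real (E j s ∩ firstHit (Icc 1 n) (crossingEvent J E) s) / s := by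
  rw [sum_comm, ← biUnion_firstHit, measureReal_biUnion_finset (pairwiseDisjoint_firstHit _ _)
    fun s _ => measurableSet_firstHit _ _ (measurableSet_crossingEvent J hE) s]
  refine sum_le_sum fun s hs => ?_
  have hs_pos : (0 : ℝ) < s := by have := (mem_Icc.1 hs).1; positivity
  rw [← sum_div, le_div_iff₀ hs_pos, mul_comm]
  exact natCast_mul_measureReal_le_sum J (fun j _ => hE j s) fun ω hω =>
    firstHit_subset (Icc 1 n) (crossingEvent J E) s hω

lemma sum_measureReal_inter_div_le {n : ℕ} {E B : ℕ → Set Ω} {ζ : ℕ → ℝ}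
    (hEm : ∀ s, MeasurableSet (E s)) (hBm : ∀ s, MeasurableSet (B s))
    (hE : MonotoneOn E (Set.Iic n)) (hB : (Icc 1 n : Set ℕ).PairwiseDisjoint B)
    (hζ0 : ζ 0 ≤ 0) (hζ : ∀ s ∈ Icc 1 n, μ.real (E s) ≤ ζ s) :
    ∑ s ∈ Icc 1 n, μ.real (E s ∩ B s) / s ≤ ∑ s ∈ Icc 1 n, (ζ s - ζ (s - 1)) / s := by
  refine sum_div_le_sum_sub_div _ _ n hζ0 fun s hs => ?_
  have hsn := (mem_Icc.1 hs).2
  have hsub : Icc 1 s ⊆ Icc 1 n := Icc_subset_Icc le_rfl hsn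
  calc ∑ r ∈ Icc 1 s, μ.real (E r ∩ B r) = μ.real (⋃ r ∈ Icc 1 s, E r ∩ B r) :=
        (measureReal_biUnion_finset ((hB.subset (coe_subset.2 hsub)).mono
          fun r => Set.inter_subset_right) fun r _ => (hEm r).inter (hBm r)).symm
    _ ≤ μ.real (E s) := measureReal_mono (Set.iUnion₂_subset fun r hr =>
        Set.inter_subset_left.trans (hE ((mem_Icc.1 hr).2.trans hsn) hsn (mem_Icc.1 hr).2))
    _ ≤ ζ s := hζ s hs

end Crossings

theorem stmt_1_general {Ω : Type*} [MeasurableSpace Ω] (μ : Measure Ω) [IsProbabilityMeasure μ]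
    (t t0 : ℕ)
    (W : ℕ → ℕ → Set Ω) (hWmeas : ∀ j s, MeasurableSet (W j s))
    (hWmono : ∀ j s, s < t0 → W j s ⊆ W j (s + 1))
    (ζ : ℕ → ℝ) (hζ0 : ζ 0 = 0)
    (hp : ∀ j ∈ Finset.Icc 1 t, ∀ s ∈ Finset.Icc 1 t0, (μ (W j s)).toReal ≤ ζ s) :
    (μ (⋃ s ∈ Finset.Icc 1 t0,
        {ω | s ≤ ((Finset.Icc 1 t).filter (fun j => ω ∈ W j s)).card})).toReal
      ≤ (t : ℝ) * ∑ s ∈ Finset.Icc 1 t0, (ζ s - ζ (s - 1)) / (s : ℝ) := by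
  have hW : ∀ j, MonotoneOn (W j) (Set.Iic t0) := fun j =>
    monotoneOn_of_le_succ Set.ordConnected_Iic fun s _ _ hs => by
      simpa using hWmono j s (Order.succ_le_iff.1 hs)
  calc μ.real (⋃ s ∈ Icc 1 t0, crossingEvent (Icc 1 t) W s)
      ≤ ∑ j ∈ Icc 1 t, ∑ s ∈ Icc 1 t0,
          μ.real (W j s ∩ firstHit (Icc 1 t0) (crossingEvent (Icc 1 t) W) s) / s :=
        measureReal_biUnion_crossingEvent_le _ _ hWmeas
    _ ≤ ∑ j ∈ Icc 1 t, ∑ s ∈ Icc 1 t0, (ζ s - ζ (s - 1)) / s :=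
        sum_le_sum fun j hj => sum_measureReal_inter_div_le (hWmeas j)
          (measurableSet_firstHit _ _ (measurableSet_crossingEvent _ hWmeas)) (hW j)
          (pairwiseDisjoint_firstHit _ _) hζ0.le (hp j hj)
    _ = t * ∑ s ∈ Icc 1 t0, (ζ s - ζ (s - 1)) / s := by simp

theorem stmt_1 {Ω : Type*} [MeasurableSpace Ω] (μ : Measure Ω) [IsProbabilityMeasure μ]
    (t t0 : ℕ) (ht0 : 1 ≤ t0) (htt0 : t0 ≤ t)
    (W : ℕ → ℕ → Set Ω) (hWmeas : ∀ j s, MeasurableSet (W j s))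
    (hWmono : ∀ j s, s < t0 → W j s ⊆ W j (s + 1))
    (ζ : ℕ → ℝ) (hζ0 : ζ 0 = 0) (hζmono : ∀ s < t0, ζ s ≤ ζ (s + 1)) (hζ1 : ζ t0 ≤ 1)
    (hp : ∀ j ∈ Finset.Icc 1 t, ∀ s ∈ Finset.Icc 1 t0, (μ (W j s)).toReal ≤ ζ s) :
    (μ (⋃ s ∈ Finset.Icc 1 t0,
        {ω | s ≤ ((Finset.Icc 1 t).filter (fun j => ω ∈ W j s)).card})).toReal
      ≤ (t : ℝ) * ∑ s ∈ Finset.Icc 1 t0, (ζ s - ζ (s - 1)) / (s : ℝ) :=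
  stmt_1_general μ t t0 W hWmeas hWmono ζ hζ0 hp
end

section
/- Let $J, k$ be positive integers with $k \le J$, let $\alpha \in (0,1)$, and define $\alpha_m = \frac{k\alpha}{J - (m-k)^+}$ for $m \in \{1,\ldots,J\}$, where $x^+ = \max\{x,0\}$. Let $T \subseteq \{1,\ldots,J\}$ with $|T| \ge k$, and let $W_j$ ($j \in T$) be events on a probability space with $P(W_j) \le \alpha_{J - |T| + k}$ for all $j \in T$. Then $P\left(\left|\{j \in T: \omega \in W_j\}\right| \ge k\right) \le \alpha$. -/
open Finset MeasureTheory
open scoped Classical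

theorem stmt_3 (J k : ℕ) (hk : 1 ≤ k) (hkJ : k ≤ J) (α : ℝ) (hα : α ∈ Set.Ioo (0:ℝ) 1)
    (T : Finset ℕ) (hT : T ⊆ Finset.Icc 1 J) (hTk : k ≤ T.card)
    {Ω : Type*} [MeasurableSpace Ω] (μ : Measure Ω) [IsProbabilityMeasure μ]
    (W : ℕ → Set Ω) (hWmeas : ∀ j ∈ T, MeasurableSet (W j))
    (hW : ∀ j ∈ T, (μ (W j)).toReal ≤
      (k : ℝ) * α / ((J : ℝ) - max (((J : ℝ) - (T.card : ℝ) + (k : ℝ)) - (k : ℝ)) 0)) :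
    (μ {ω | k ≤ (T.filter (fun j => ω ∈ W j)).card}).toReal ≤ α := by
  -- simplify the bound hypothesis
  have hTJ : T.card ≤ J := by
    have := Finset.card_le_card hT
    simpa using this
  have hden : ((J : ℝ) - max (((J : ℝ) - (T.card : ℝ) + (k : ℝ)) - (k : ℝ)) 0) = (T.card : ℝ) := by
    have h1 : (T.card : ℝ) ≤ (J : ℝ) := by exact_mod_cast hTJ
    rw [max_eq_left (by linarith)]
    ring
  have hTpos : (0:ℝ) < (T.card : ℝ) := by
    have : 0 < T.card := lt_of_lt_of_le hk hTk
    exact_mod_cast this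
  have hW' : ∀ j ∈ T, (μ (W j)).toReal ≤ (k : ℝ) * α / (T.card : ℝ) := by
    intro j hj
    have := hW j hj
    rwa [hden] at this
  set s : Set Ω := {ω | k ≤ (T.filter (fun j => ω ∈ W j)).card} with hs
  -- pointwise sum of indicators equals the card of the filter
  have hsum : ∀ ω : Ω, (∑ j ∈ T, (W j).indicator (fun _ => (1:ENNReal)) ω) =
      ((T.filter (fun j => ω ∈ W j)).card : ENNReal) := by
    intro ω
    rw [Finset.card_filter]
    push_cast
    simp [Set.indicator_apply]
  -- Markov inequality step
  have key : (k : ENNReal) * μ s ≤ ∑ j ∈ T, μ (W j) := by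
    have hmeas : Measurable (fun ω => ∑ j ∈ T, (W j).indicator (fun _ => (1:ENNReal)) ω) := by
      apply Finset.measurable_sum
      intro j hj
      exact (measurable_const.indicator (hWmeas j hj))
    calc (k : ENNReal) * μ s = ∫⁻ _ in s, (k : ENNReal) ∂μ := by
          rw [MeasureTheory.setLIntegral_const]
      _ ≤ ∫⁻ ω in s, (∑ j ∈ T, (W j).indicator (fun _ => (1:ENNReal)) ω) ∂μ := by
          apply MeasureTheory.setLIntegral_mono hmeas
          intro ω hω
          rw [hsum ω]
          exact_mod_cast hω
      _ ≤ ∫⁻ ω, (∑ j ∈ T, (W j).indicator (fun _ => (1:ENNReal)) ω) ∂μ :=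
          MeasureTheory.setLIntegral_le_lintegral _ _
      _ = ∑ j ∈ T, ∫⁻ ω, (W j).indicator (fun _ => (1:ENNReal)) ω ∂μ := by
          exact MeasureTheory.lintegral_finset_sum _ (fun j hj =>
            measurable_const.indicator (hWmeas j hj))
      _ = ∑ j ∈ T, μ (W j) := by
          refine Finset.sum_congr rfl fun j hj => ?_
          exact MeasureTheory.lintegral_indicator_one (hWmeas j hj)
  -- convert to reals
  have hsfin : μ s ≠ ⊤ := measure_ne_top μ s
  have hWfin : ∀ j ∈ T, μ (W j) ≠ ⊤ := fun j _ => measure_ne_top μ (W j)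
  have key' : (k : ℝ) * (μ s).toReal ≤ ∑ j ∈ T, (μ (W j)).toReal := by
    have h1 : ((k : ENNReal) * μ s).toReal ≤ (∑ j ∈ T, μ (W j)).toReal :=
      ENNReal.toReal_mono (by
        exact (ENNReal.sum_lt_top.mpr (fun j hj => (hWfin j hj).lt_top)).ne) key
    rw [ENNReal.toReal_mul, ENNReal.toReal_sum hWfin] at h1
    simpa using h1
  have hsumle : ∑ j ∈ T, (μ (W j)).toReal ≤ (k:ℝ) * α := by
    calc ∑ j ∈ T, (μ (W j)).toReal ≤ ∑ _j ∈ T, (k : ℝ) * α / (T.card : ℝ) :=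
          Finset.sum_le_sum hW'
      _ = (T.card : ℝ) * ((k : ℝ) * α / (T.card : ℝ)) := by
          rw [Finset.sum_const, nsmul_eq_mul]
      _ = (k:ℝ) * α := by field_simp
  have hkpos : (0:ℝ) < (k:ℝ) := by exact_mod_cast hk
  nlinarith [key', hsumle]
end

section
/- Let $t_0 \ge 1$, let $\pi_1,\ldots,\pi_{t_0} \ge 0$, let $t > 0$, and let $0 = \zeta_0 \le \zeta_1 \le \cdots \le \zeta_{t_0}$. Suppose that for every $t_1 \in \{1,\ldots,t_0\}$ one has $\sum_{s=1}^{t_1} s\,\pi_s \le t\,\zeta_{t_1}$. Then $\sum_{s=1}^{t_0} \pi_s \le t \sum_{s=1}^{t_0} \frac{\zeta_s - \zeta_{s-1}}{s}$. -/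
open Finset

/-! With the slack `A s = t * ζ s - ∑_{i ≤ s} i * π i`, nonnegative by hypothesis and zero at `0`,
the right-hand side minus the left-hand side is exactly `∑_{s ≤ t0} (A s - A (s - 1)) / s`,
because the increment of `∑_{i ≤ s} i * π i` at `s` is `s * π s`. That sum is nonnegative by
Abel summation. -/

/-- Abel summation: the sum equals `f n / n + ∑_{s<n} f s (1/s - 1/(s+1))`, whose terms are
all nonnegative. -/
lemma div_le_sum_Icc_sub_div (f : ℕ → ℝ) (hf0 : f 0 = 0) (n : ℕ) (hf : ∀ s ≤ n, 0 ≤ f s) :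
    f n / n ≤ ∑ s ∈ Icc 1 n, (f s - f (s - 1)) / (s : ℝ) := by
  induction n with
  | zero => simp [hf0]
  | succ n ih =>
    rw [sum_Icc_succ_top (by omega), Nat.add_sub_cancel, Nat.cast_succ]
    have hshift : f n / ((n : ℝ) + 1) ≤ f n / n := by
      rcases Nat.eq_zero_or_pos n with rfl | hn
      · simp [hf0]
      · exact div_le_div_of_nonneg_left (hf n n.le_succ) (by exact_mod_cast hn) (by linarith)
    have hsplit : f (n + 1) / ((n : ℝ) + 1)
        = f n / ((n : ℝ) + 1) + (f (n + 1) - f n) / ((n : ℝ) + 1) := by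
      ring
    linarith [ih fun s hs => hf s (hs.trans n.le_succ)]

lemma sum_Icc_sub_div_nonneg (f : ℕ → ℝ) (hf0 : f 0 = 0) (n : ℕ) (hf : ∀ s ≤ n, 0 ≤ f s) :
    0 ≤ ∑ s ∈ Icc 1 n, (f s - f (s - 1)) / (s : ℝ) :=
  (div_nonneg (hf n le_rfl) n.cast_nonneg).trans (div_le_sum_Icc_sub_div f hf0 n hf)

lemma sum_Icc_weighted_partialSum_sub_div (π : ℕ → ℝ) (n : ℕ) :
    ∑ s ∈ Icc 1 n, ((∑ i ∈ Icc 1 s, (i : ℝ) * π i) - ∑ i ∈ Icc 1 (s - 1), (i : ℝ) * π i) / (s : ℝ)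
      = ∑ s ∈ Icc 1 n, π s := by
  refine sum_congr rfl fun s hs => ?_
  obtain ⟨m, rfl⟩ := Nat.exists_eq_add_of_le' (mem_Icc.mp hs).1
  rw [sum_Icc_succ_top (by omega), Nat.add_sub_cancel]
  field_simp
  ring

theorem stmt_14_general (t0 : ℕ) (π : ℕ → ℝ)
    (t : ℝ) (ζ : ℕ → ℝ) (hζ0 : ζ 0 = 0)
    (h : ∀ t1 ∈ Finset.Icc 1 t0, ∑ s ∈ Finset.Icc 1 t1, (s : ℝ) * π s ≤ t * ζ t1) :
    ∑ s ∈ Finset.Icc 1 t0, π s ≤ t * ∑ s ∈ Finset.Icc 1 t0, (ζ s - ζ (s - 1)) / (s : ℝ) := by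
  set slack : ℕ → ℝ := fun s => t * ζ s - ∑ i ∈ Icc 1 s, (i : ℝ) * π i with hslack
  have hslack0 : slack 0 = 0 := by simp [hslack, hζ0]
  have hslack_nonneg : ∀ s ≤ t0, 0 ≤ slack s := by
    intro s hs
    rcases Nat.eq_zero_or_pos s with rfl | hs0
    · exact hslack0.ge
    · exact sub_nonneg.mpr (h s (mem_Icc.mpr ⟨hs0, hs⟩))
  have hsum : ∑ s ∈ Icc 1 t0, (slack s - slack (s - 1)) / (s : ℝ)
      = t * ∑ s ∈ Icc 1 t0, (ζ s - ζ (s - 1)) / (s : ℝ) - ∑ s ∈ Icc 1 t0, π s := by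
    rw [← sum_Icc_weighted_partialSum_sub_div π t0, mul_sum, ← sum_sub_distrib]
    refine sum_congr rfl fun s _ => ?_
    simp only [hslack]
    ring
  linarith [sum_Icc_sub_div_nonneg slack hslack0 t0 hslack_nonneg]

theorem stmt_14 (t0 : ℕ) (ht0 : 1 ≤ t0) (π : ℕ → ℝ) (hπ : ∀ s, 0 ≤ π s)
    (t : ℝ) (ht : 0 < t) (ζ : ℕ → ℝ) (hζ0 : ζ 0 = 0)
    (hζmono : ∀ s < t0, ζ s ≤ ζ (s + 1))
    (h : ∀ t1 ∈ Finset.Icc 1 t0, ∑ s ∈ Finset.Icc 1 t1, (s : ℝ) * π s ≤ t * ζ t1) :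
    ∑ s ∈ Finset.Icc 1 t0, π s ≤ t * ∑ s ∈ Finset.Icc 1 t0, (ζ s - ζ (s - 1)) / (s : ℝ) :=
  stmt_14_general t0 π t ζ hζ0 h
end

section
/- Let $J$ be a positive integer, $\gamma \in [0,1)$, and $v \in \{0,1,\ldots,J\}$, and define $\overline{t}(v,\gamma) = \min\left\{\lfloor \gamma J \rfloor + 1,\ v,\ \left\lfloor \frac{\gamma(J-v)}{1-\gamma} \right\rfloor + 1\right\}$. Suppose $r, s$ are positive integers with $s \le v$, $r \le J$, $\gamma r < s$, and $s - 1 \le \gamma(r-1)$, and $r \le J - v + s$. Then $s \le \overline{t}(v,\gamma)$. -/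
theorem stmt_15 (γ : ℝ) (hγ0 : 0 ≤ γ) (hγ1 : γ < 1) (J v r s : ℤ)
    (hJ : 1 ≤ J) (hv0 : 0 ≤ v) (hvJ : v ≤ J) (hr : 1 ≤ r) (hs : 1 ≤ s)
    (hsv : s ≤ v) (hrJ : r ≤ J) (h1 : γ * (r : ℝ) < (s : ℝ))
    (h2 : (s : ℝ) - 1 ≤ γ * ((r : ℝ) - 1)) (h3 : r ≤ J - v + s) :
    s ≤ min (min (⌊γ * (J : ℝ)⌋ + 1) v) (⌊γ * ((J : ℝ) - (v : ℝ)) / (1 - γ)⌋ + 1) := by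
  have hrR : (r : ℝ) ≤ (J : ℝ) := by exact_mod_cast hrJ
  have h3R : (r : ℝ) ≤ (J : ℝ) - v + s := by exact_mod_cast h3
  refine le_min (le_min ?_ hsv) ?_
  · have : (s : ℝ) - 1 ≤ γ * (J : ℝ) := by nlinarith
    have : ((s - 1 : ℤ) : ℝ) ≤ γ * (J : ℝ) := by push_cast; linarith
    have := Int.le_floor.mpr this
    omega
  · have h1γ : (0:ℝ) < 1 - γ := by linarith
    have key : (s : ℝ) - 1 ≤ γ * ((J : ℝ) - (v : ℝ)) / (1 - γ) := by
      rw [le_div_iff₀ h1γ]; nlinarith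
    have : ((s - 1 : ℤ) : ℝ) ≤ γ * ((J : ℝ) - (v : ℝ)) / (1 - γ) := by push_cast; linarith
    have := Int.le_floor.mpr this
    omega
end
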